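/- arXiv:2011.09382 — 2 statements merged into one kernel-verified Lean document; each statement's English description precedes it below -/
import Mathlib

section
/- Let Γ be a piecewise-C¹ curve in ℂ of length |Γ|, let f and g be holomorphic on an open neighborhood of Γ, let C > 1 be real, and suppose that |f(z)| > C·|g(z)| and f(z) ≠ 0 for all z ∈ Γ (so in particular f(z) + g(z) ≠ 0 on Γ). Then |∫_Γ (f+g)'(z)/(f+g)(z) dz| ≤ |∫_Γ f'(z)/f(z) dz| + (C/(C−1)) · |Γ| · sup_{z∈Γ} ( |f'(z)|·|g(z)|/|f(z)|² + |g'(z)|/|f(z)| ). -/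
/-!
On `Γ` the integrand splits as `(f + g)'/(f + g) = f'/f + (f g' - f' g)/(f (f + g))`, and
`C‖g‖ < ‖f‖` gives `‖f + g‖ ≥ (1 - 1/C)‖f‖`, which bounds the remainder pointwise by
`C/(C-1) · (‖f'‖‖g‖/‖f‖² + ‖g'‖/‖f‖)`. Integrating against `γ'` yields the estimate; the
supremum is finite because this bound is continuous on the compact curve `Γ`.
-/

open MeasureTheory Set

section Domination

variable {E : Type*} [SeminormedAddCommGroup E] {v w : E} {C : ℝ}

lemma norm_pos_of_mul_norm_lt (hC : 0 ≤ C) (h : C * ‖w‖ < ‖v‖) : 0 < ‖v‖ :=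
  (mul_nonneg hC (norm_nonneg w)).trans_lt h

lemma add_ne_zero_of_mul_norm_lt (hC : 1 ≤ C) (h : C * ‖w‖ < ‖v‖) : v + w ≠ 0 := by
  intro hvw
  rw [eq_neg_of_add_eq_zero_right hvw, norm_neg] at h
  nlinarith [norm_nonneg v]

lemma one_sub_inv_mul_norm_le_norm_add (hC : 0 < C) (h : C * ‖w‖ ≤ ‖v‖) :
    (1 - C⁻¹) * ‖v‖ ≤ ‖v + w‖ := by
  have hw : ‖w‖ ≤ C⁻¹ * ‖v‖ := by
    rw [inv_mul_eq_div, le_div_iff₀ hC]; linarith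
  linarith [norm_sub_le_norm_add v w]

end Domination

lemma norm_div_add_sub_div_le {𝕜 : Type*} [NormedField 𝕜] {p q p' q' : 𝕜} {C : ℝ}
    (hC : 1 < C) (h : C * ‖q‖ < ‖p‖) :
    ‖(p' + q') / (p + q) - p' / p‖ ≤
      C / (C - 1) * (‖p'‖ * ‖q‖ / ‖p‖ ^ 2 + ‖q'‖ / ‖p‖) := by
  have hp_pos : 0 < ‖p‖ := norm_pos_of_mul_norm_lt (by linarith) h
  have hp : p ≠ 0 := norm_pos_iff.mp hp_pos
  have hpq : p + q ≠ 0 := add_ne_zero_of_mul_norm_lt hC.le h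
  have hlow : (1 - C⁻¹) * ‖p‖ ≤ ‖p + q‖ :=
    one_sub_inv_mul_norm_le_norm_add (by linarith) h.le
  have hC' : 0 < 1 - C⁻¹ := sub_pos.mpr (inv_lt_one_of_one_lt₀ hC)
  have hsplit : (p' + q') / (p + q) - p' / p = (p * q' - p' * q) / (p * (p + q)) := by
    field_simp; ring
  calc ‖(p' + q') / (p + q) - p' / p‖
      = ‖p * q' - p' * q‖ / (‖p‖ * ‖p + q‖) := by rw [hsplit, norm_div, norm_mul]
    _ ≤ (‖p‖ * ‖q'‖ + ‖p'‖ * ‖q‖) / (‖p‖ * ((1 - C⁻¹) * ‖p‖)) := by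
        gcongr
        exact (norm_sub_le _ _).trans_eq (by rw [norm_mul, norm_mul])
    _ = C / (C - 1) * (‖p'‖ * ‖q‖ / ‖p‖ ^ 2 + ‖q'‖ / ‖p‖) := by
        have : C - 1 ≠ 0 := by linarith
        field_simp
        ring

lemma norm_intervalIntegral_mul_le_add {𝕜 : Type*} [RCLike 𝕜] {a b K : ℝ} {A B v : ℝ → 𝕜}
    (hab : a ≤ b) (hA : ContinuousOn A (Icc a b)) (hB : ContinuousOn B (Icc a b))
    (hv : IntervalIntegrable v volume a b) (hK : ∀ t ∈ Icc a b, ‖A t - B t‖ ≤ K) :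
    ‖∫ t in a..b, A t * v t‖ ≤ ‖∫ t in a..b, B t * v t‖ + K * ∫ t in a..b, ‖v t‖ := by
  rw [← uIcc_of_le hab] at hA hB
  have hBv := hv.continuousOn_mul hB
  have hABv : IntervalIntegrable (fun t => (A t - B t) * v t) volume a b :=
    hv.continuousOn_mul (hA.sub hB)
  have hsplit : ∫ t in a..b, A t * v t =
      (∫ t in a..b, B t * v t) + ∫ t in a..b, (A t - B t) * v t := by
    rw [← intervalIntegral.integral_add hBv hABv]
    congr 1 with t
    ring
  have hrem : ‖∫ t in a..b, (A t - B t) * v t‖ ≤ K * ∫ t in a..b, ‖v t‖ := by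
    rw [← intervalIntegral.integral_const_mul]
    refine intervalIntegral.norm_integral_le_of_norm_le hab
      (Filter.Eventually.of_forall fun t ht => ?_) (hv.norm.const_mul K)
    rw [norm_mul]
    exact mul_le_mul_of_nonneg_right (hK t (Ioc_subset_Icc_self ht)) (norm_nonneg _)
  rw [hsplit]
  exact (norm_add_le _ _).trans (add_le_add le_rfl hrem)

theorem arg_principle_integral_remainder_general
    (a b : ℝ) (hab : a ≤ b)
    (γ γ' : ℝ → ℂ)
    (hγc : ContinuousOn γ (Set.Icc a b))
    (hγ'i : IntervalIntegrable γ' MeasureTheory.volume a b)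
    (U : Set ℂ) (hU : IsOpen U) (hΓU : γ '' Set.Icc a b ⊆ U)
    (f g : ℂ → ℂ)
    (hf : DifferentiableOn ℂ f U) (hg : DifferentiableOn ℂ g U)
    (C : ℝ) (hC : 1 < C)
    (hdom : ∀ z ∈ γ '' Set.Icc a b, C * ‖g z‖ < ‖f z‖) :
    ‖∫ t in a..b, (deriv f (γ t) + deriv g (γ t)) / (f (γ t) + g (γ t)) * γ' t‖ ≤
      ‖∫ t in a..b, deriv f (γ t) / f (γ t) * γ' t‖ +
        C / (C - 1) * (∫ t in a..b, ‖γ' t‖) *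
          sSup ((fun z => ‖deriv f z‖ * ‖g z‖ / ‖f z‖ ^ 2 +
              ‖deriv g z‖ / ‖f z‖) '' (γ '' Set.Icc a b)) := by
  set Γ := γ '' Icc a b
  set φ : ℂ → ℝ := fun z => ‖deriv f z‖ * ‖g z‖ / ‖f z‖ ^ 2 + ‖deriv g z‖ / ‖f z‖
  have hf0 : ∀ z ∈ Γ, f z ≠ 0 := fun z hz =>
    norm_pos_iff.mp (norm_pos_of_mul_norm_lt (by linarith) (hdom z hz))
  have hfg0 : ∀ z ∈ Γ, f z + g z ≠ 0 := fun z hz => add_ne_zero_of_mul_norm_lt hC.le (hdom z hz)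
  have hfΓ := hf.continuousOn.mono hΓU
  have hgΓ := hg.continuousOn.mono hΓU
  have hf'Γ := (hf.deriv hU).continuousOn.mono hΓU
  have hg'Γ := (hg.deriv hU).continuousOn.mono hΓU
  have hφ : ContinuousOn φ Γ :=
    ((hf'Γ.norm.mul hgΓ.norm).div (hfΓ.norm.pow 2) fun z hz => by simpa using hf0 z hz).add
      (hg'Γ.norm.div hfΓ.norm fun z hz => by simpa using hf0 z hz)
  have hφ_le : ∀ z ∈ Γ, φ z ≤ sSup (φ '' Γ) := fun z hz =>
    le_csSup ((isCompact_Icc.image_of_continuousOn hγc).bddAbove_image hφ) (mem_image_of_mem φ hz)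
  have hγΓ : MapsTo γ (Icc a b) Γ := mapsTo_image γ _
  have key := norm_intervalIntegral_mul_le_add (K := C / (C - 1) * sSup (φ '' Γ)) hab
    (((hf'Γ.add hg'Γ).div (hfΓ.add hgΓ) hfg0).comp hγc hγΓ)
    ((hf'Γ.div hfΓ hf0).comp hγc hγΓ) hγ'i fun t ht =>
      (norm_div_add_sub_div_le hC (hdom _ (hγΓ ht))).trans
        (mul_le_mul_of_nonneg_left (hφ_le _ (hγΓ ht)) (div_pos (by linarith) (by linarith)).le)
  simp only [Function.comp_def, Pi.add_apply, Pi.div_apply] at key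
  linarith

/-- If `|f| > C·|g|` with `C > 1` and `f ≠ 0` on the piecewise-C¹ curve `Γ`
(parametrized by `γ : [a,b] → ℂ`, with derivative `γ'` away from a finite exceptional set),
and `f, g` are holomorphic on an open neighborhood of `Γ`, then
`|∫_Γ (f+g)'/(f+g)| ≤ |∫_Γ f'/f| + (C/(C-1))·|Γ|·sup_{z∈Γ} (|f'(z)||g(z)|/|f(z)|² + |g'(z)|/|f(z)|)`. -/
theorem arg_principle_integral_remainder
    (a b : ℝ) (hab : a ≤ b)
    (γ γ' : ℝ → ℂ)
    (hγc : ContinuousOn γ (Set.Icc a b))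
    (s : Set ℝ) (hs : s.Finite)
    (hγd : ∀ t ∈ Set.Icc a b \ s, HasDerivAt γ (γ' t) t)
    (hγ'i : IntervalIntegrable γ' MeasureTheory.volume a b)
    (U : Set ℂ) (hU : IsOpen U) (hΓU : γ '' Set.Icc a b ⊆ U)
    (f g : ℂ → ℂ)
    (hf : DifferentiableOn ℂ f U) (hg : DifferentiableOn ℂ g U)
    (C : ℝ) (hC : 1 < C)
    (hdom : ∀ z ∈ γ '' Set.Icc a b, C * ‖g z‖ < ‖f z‖)
    (hf0 : ∀ z ∈ γ '' Set.Icc a b, f z ≠ 0) :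
    ‖∫ t in a..b, (deriv f (γ t) + deriv g (γ t)) / (f (γ t) + g (γ t)) * γ' t‖ ≤
      ‖∫ t in a..b, deriv f (γ t) / f (γ t) * γ' t‖ +
        C / (C - 1) * (∫ t in a..b, ‖γ' t‖) *
          sSup ((fun z => ‖deriv f z‖ * ‖g z‖ / ‖f z‖ ^ 2 +
              ‖deriv g z‖ / ‖f z‖) '' (γ '' Set.Icc a b)) :=
  arg_principle_integral_remainder_general a b hab γ γ' hγc hγ'i U hU hΓU f g hf hg C hC hdom
end

section
/- Let a, b, c be complex numbers with c not a non-positive integer (in particular c ≠ 0). Then for all complex z with |z| < 1: (d/dz) ₂F₁(a,b;c;z) = ( (c−a)(c−b) · ₂F₁(a,b;c+1;z) + c(a+b−c) · ₂F₁(a,b;c;z) ) / ( c(1−z) ). -/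
/-! Write `₂F₁(a,b;c;z) = ∑ Cₙ zⁿ`. The series has radius at least `1` (infinite when `a` or `b`
is a non-positive integer), so inside the unit disc it can be differentiated termwise and
`c (1 - z) F'(z) = ∑ c ((n + 1) Cₙ₊₁ - n Cₙ) zⁿ`. Since `Cₙ₊₁ / Cₙ = (a+n)(b+n) / ((c+n)(n+1))` and
the coefficients of `₂F₁(a,b;c+1;·)` are `Cₙ c / (c + n)`, each coefficient of that series equals
`(c - a)(c - b) C'ₙ + c (a + b - c) Cₙ`. -/

/-- The Gaussian hypergeometric function
`₂F₁(a,b;c;z) = Σ_{n≥0} ((a)_n (b)_n / ((c)_n n!)) zⁿ`. -/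
noncomputable def hyp2F1 (a b c z : ℂ) : ℂ :=
  ∑' n : ℕ,
    Polynomial.eval a (ascPochhammer ℂ n) * Polynomial.eval b (ascPochhammer ℂ n) /
      (Polynomial.eval c (ascPochhammer ℂ n) * (n.factorial : ℂ)) * z ^ n

open FormalMultilinearSeries

theorem HasFPowerSeriesOnBall.deriv_ofScalars {𝕜 : Type*} [NontriviallyNormedField 𝕜]
    [CompleteSpace 𝕜] {f : 𝕜 → 𝕜} {c : ℕ → 𝕜} {r : ENNReal}
    (h : HasFPowerSeriesOnBall f (ofScalars 𝕜 c) 0 r) :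
    HasFPowerSeriesOnBall (deriv f) (ofScalars 𝕜 fun n ↦ (n + 1) * c (n + 1)) 0 r := by
  convert (ContinuousLinearMap.apply 𝕜 𝕜 (1 : 𝕜)).comp_hasFPowerSeriesOnBall h.fderiv using 1
  · rfl
  ext n
  change (ofScalars 𝕜 _).coeff n = (ofScalars 𝕜 c).derivSeries.coeff n 1
  rw [coeff_ofScalars, derivSeries_coeff_one, coeff_ofScalars, nsmul_eq_mul, Nat.cast_succ]

theorem HasFPowerSeriesOnBall.hasSum_ofScalars {𝕜 : Type*} [NontriviallyNormedField 𝕜]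
    {f : 𝕜 → 𝕜} {c : ℕ → 𝕜} {r : ENNReal}
    (h : HasFPowerSeriesOnBall f (ofScalars 𝕜 c) 0 r) {z : 𝕜} (hz : z ∈ Metric.eball 0 r) :
    HasSum (fun n ↦ c n * z ^ n) (f z) := by
  simpa [ofScalars_apply_eq, mul_comm] using h.hasSum hz

theorem HasSum.shift_sub_mul_pow {R : Type*} [Ring R] [TopologicalSpace R] [IsTopologicalRing R]
    {u : ℕ → R} {z d : R} (h : HasSum (fun n ↦ u (n + 1) * z ^ n) d) (hu : u 0 = 0) :
    HasSum (fun n ↦ (u (n + 1) - u n) * z ^ n) (d * (1 - z)) := by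
  have hshift : HasSum (fun n ↦ u n * z ^ n) (d * z) := by
    rw [← hasSum_nat_add_iff' 1]
    simpa [hu, pow_succ, mul_assoc] using h.mul_right z
  simpa [sub_mul, mul_one_sub] using h.sub hshift

theorem ascPochhammer_eval_add_one_mul {R : Type*} [CommSemiring R] (c : R) (n : ℕ) :
    c * (ascPochhammer R n).eval (c + 1) = (ascPochhammer R n).eval c * (c + n) := by
  rw [← ascPochhammer_succ_eval, ascPochhammer_succ_left, Polynomial.eval_mul,
    Polynomial.eval_comp]
  simp

section ordinaryHypergeometric

variable {𝕂 : Type*}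

theorem ordinaryHypergeometricCoefficient_succ [Field 𝕂] (a b c : 𝕂) (n : ℕ) :
    ordinaryHypergeometricCoefficient a b c (n + 1) =
      ordinaryHypergeometricCoefficient a b c n * ((a + n) * (b + n) / ((c + n) * (n + 1))) := by
  simp only [ordinaryHypergeometricCoefficient, ascPochhammer_succ_eval, Nat.factorial_succ]
  push_cast
  simp only [mul_inv, div_eq_mul_inv]
  ring

theorem ordinaryHypergeometricCoefficient_add_one_right [Field 𝕂] (a b : 𝕂) {c : 𝕂}
    (hc : c ≠ 0) (n : ℕ) :
    ordinaryHypergeometricCoefficient a b (c + 1) n =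
      ordinaryHypergeometricCoefficient a b c n * (c / (c + n)) := by
  have hpoch : (ascPochhammer 𝕂 n).eval (c + 1) = (ascPochhammer 𝕂 n).eval c * (c + n) / c := by
    rw [← ascPochhammer_eval_add_one_mul, mul_div_cancel_left₀ _ hc]
  simp only [ordinaryHypergeometricCoefficient, hpoch, div_eq_mul_inv, mul_inv, inv_inv]
  ring

theorem ordinaryHypergeometricCoefficient_contiguous [Field 𝕂] [CharZero 𝕂]
    (a b : 𝕂) {c : 𝕂} (n : ℕ) (hc : c ≠ 0) (hcn : c + n ≠ 0) :
    c * ((n + 1) * ordinaryHypergeometricCoefficient a b c (n + 1) -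
        n * ordinaryHypergeometricCoefficient a b c n) =
      (c - a) * (c - b) * ordinaryHypergeometricCoefficient a b (c + 1) n +
        c * (a + b - c) * ordinaryHypergeometricCoefficient a b c n := by
  have hn : (n + 1 : 𝕂) ≠ 0 := Nat.cast_add_one_ne_zero n
  rw [ordinaryHypergeometricCoefficient_succ,
    ordinaryHypergeometricCoefficient_add_one_right a b hc]
  field_simp
  ring

variable (𝔸 : Type*) [RCLike 𝕂] [NormedDivisionRing 𝔸] [NormedAlgebra 𝕂 𝔸]

theorem one_le_radius_ordinaryHypergeometricSeries (a b : 𝕂) {c : 𝕂} (hc : ∀ k : ℕ, c ≠ -k) :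
    1 ≤ (ordinaryHypergeometricSeries 𝔸 a b c).radius := by
  by_cases ha : ∃ k : ℕ, a = -k
  · obtain ⟨k, rfl⟩ := ha
    simp [ordinaryHypergeometric_radius_top_of_neg_nat₁]
  by_cases hb : ∃ k : ℕ, b = -k
  · obtain ⟨k, rfl⟩ := hb
    simp [ordinaryHypergeometric_radius_top_of_neg_nat₂]
  push Not at ha hb
  exact (ordinaryHypergeometricSeries_radius_eq_one 𝔸 a b c fun k ↦
    ⟨fun h ↦ ha k (by simp [h]), fun h ↦ hb k (by simp [h]), fun h ↦ hc k (by simp [h])⟩).ge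

theorem hasFPowerSeriesOnBall_ordinaryHypergeometric [CompleteSpace 𝔸] (a b : 𝕂) {c : 𝕂}
    (hc : ∀ k : ℕ, c ≠ -k) :
    HasFPowerSeriesOnBall (₂F₁ a b c) (ordinaryHypergeometricSeries 𝔸 a b c) 0 1 :=
  have h := one_le_radius_ordinaryHypergeometricSeries 𝔸 a b hc
  ((ordinaryHypergeometricSeries 𝔸 a b c).hasFPowerSeriesOnBall
    (zero_lt_one.trans_le h)).mono zero_lt_one h

end ordinaryHypergeometric

theorem hyp2F1_eq_ordinaryHypergeometric (a b c : ℂ) : hyp2F1 a b c = ₂F₁ a b c := by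
  ext z
  rw [hyp2F1, ordinaryHypergeometric_eq_tsum]
  refine tsum_congr fun n ↦ ?_
  simp only [smul_eq_mul, div_eq_mul_inv, mul_inv]
  ring

/-- Gauss's contiguous relation. If `c` is not a non-positive integer, then
for `|z| < 1`:
`d/dz ₂F₁(a,b;c;z) = ((c−a)(c−b)·₂F₁(a,b;c+1;z) + c(a+b−c)·₂F₁(a,b;c;z)) / (c(1−z))`. -/
theorem hyp2F1_deriv_eq (a b c : ℂ)
    (hc : ∀ n : ℕ, c ≠ -(n : ℂ))
    (z : ℂ) (hz : ‖z‖ < 1) :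
    deriv (hyp2F1 a b c) z =
      ((c - a) * (c - b) * hyp2F1 a b (c + 1) z + c * (a + b - c) * hyp2F1 a b c z) /
        (c * (1 - z)) := by
  have hc1 : ∀ n : ℕ, c + 1 ≠ -(n : ℂ) := fun n h ↦ hc (n + 1) (by push_cast; linear_combination h)
  have hc0 : c ≠ 0 := by simpa using hc 0
  have hz1 : (1 : ℂ) - z ≠ 0 := sub_ne_zero.2 (by rintro rfl; simp at hz)
  have hzball : z ∈ Metric.eball (0 : ℂ) 1 := by
    simpa [← ofReal_norm, ENNReal.ofReal_lt_one] using hz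
  have hF := hasFPowerSeriesOnBall_ordinaryHypergeometric ℂ a b hc
  have hF₁ := (hasFPowerSeriesOnBall_ordinaryHypergeometric ℂ a b hc1).hasSum_ofScalars hzball
  have hD := HasSum.shift_sub_mul_pow (u := fun n ↦ n * ordinaryHypergeometricCoefficient a b c n)
    (by simpa using hF.deriv_ofScalars.hasSum_ofScalars hzball) (by simp)
  simp only [hyp2F1_eq_ordinaryHypergeometric]
  rw [eq_div_iff (mul_ne_zero hc0 hz1)]
  refine HasSum.unique ?_ (((hF₁.mul_left ((c - a) * (c - b))).add
    ((hF.hasSum_ofScalars hzball).mul_left (c * (a + b - c)))))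
  convert hD.mul_left c using 1
  · ext n
    rw [← mul_assoc c, Nat.cast_succ,
      ordinaryHypergeometricCoefficient_contiguous a b n hc0 fun h ↦ hc n (by linear_combination h)]
    ring
  · ring
end
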